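/- Factorization of the categorical Fisher matrix: with θ ∈ ℝ^{m−1}, θ_j > 0, θ_m = 1 − Σθ_j > 0, the matrix A = diag(θ)^{−1/2} + (√θ_m + θ_m)⁻¹ 𝟙 (√θ)ᵀ satisfies AAᵀ = diag(θ)⁻¹ + θ_m⁻¹ 𝟙𝟙ᵀ, where √θ is the entrywise square root. -/
import Mathlib

/-- Factorization of the categorical Fisher matrix: with `θ_m = 1 − Σθ_j > 0`,
the matrix `A = diag(θ)^{-1/2} + (√θ_m + θ_m)⁻¹ 𝟙 (√θ)ᵀ` satisfies
`A Aᵀ = diag(θ)⁻¹ + θ_m⁻¹ 𝟙𝟙ᵀ`. -/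
theorem stmt_14 {k : ℕ} (θ : Fin k → ℝ)
    (hpos : ∀ j, 0 < θ j) (hsum : ∑ j, θ j < 1)
    (θm : ℝ) (hθm : θm = 1 - ∑ j, θ j)
    (A : Matrix (Fin k) (Fin k) ℝ)
    (hA : A = Matrix.diagonal (fun j => (Real.sqrt (θ j))⁻¹)
      + (Real.sqrt θm + θm)⁻¹ • Matrix.vecMulVec 1 (fun j => Real.sqrt (θ j))) :
    A * A.transpose = Matrix.diagonal (fun j => (θ j)⁻¹) + θm⁻¹ • Matrix.vecMulVec 1 1 := by
  have hθm_pos : 0 < θm := by rw [hθm]; linarith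
  set t := Real.sqrt θm with ht
  have htpos : 0 < t := Real.sqrt_pos.mpr hθm_pos
  have ht2 : t * t = θm := Real.mul_self_sqrt hθm_pos.le
  set c : ℝ := (t + θm)⁻¹ with hc
  have hsq : ∀ j, Real.sqrt (θ j) * Real.sqrt (θ j) = θ j :=
    fun j => Real.mul_self_sqrt (hpos j).le
  have hsum' : ∑ j, Real.sqrt (θ j) * Real.sqrt (θ j) = 1 - θm := by
    simp only [hsq]; rw [hθm]; ring
  have key : 2 * c + c * c * (1 - θm) = θm⁻¹ := by
    have hne : t + θm ≠ 0 := by positivity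
    rw [hc]
    field_simp
    nlinarith [ht2]
  subst hA
  ext i j
  simp only [Matrix.mul_apply, Matrix.add_apply, Matrix.smul_apply, Matrix.transpose_apply,
    Matrix.diagonal_apply, Matrix.vecMulVec_apply, Pi.one_apply, smul_eq_mul, one_mul]
  have expand : ∀ l : Fin k,
      ((if i = l then (Real.sqrt (θ i))⁻¹ else 0) + c * Real.sqrt (θ l)) *
      ((if j = l then (Real.sqrt (θ j))⁻¹ else 0) + c * Real.sqrt (θ l))
      = (if i = l then (Real.sqrt (θ i))⁻¹ else 0) * (if j = l then (Real.sqrt (θ j))⁻¹ else 0)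
        + c * ((if i = l then (Real.sqrt (θ i))⁻¹ else 0) * Real.sqrt (θ l))
        + c * ((if j = l then (Real.sqrt (θ j))⁻¹ else 0) * Real.sqrt (θ l))
        + c * c * (Real.sqrt (θ l) * Real.sqrt (θ l)) := by
    intro l; ring
  rw [Finset.sum_congr rfl (fun l _ => expand l)]
  rw [Finset.sum_add_distrib, Finset.sum_add_distrib, Finset.sum_add_distrib,
    ← Finset.mul_sum, ← Finset.mul_sum, ← Finset.mul_sum, hsum']
  have h1 : ∑ l, (if i = l then (Real.sqrt (θ i))⁻¹ else 0) * Real.sqrt (θ l)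
      = (Real.sqrt (θ i))⁻¹ * Real.sqrt (θ i) := by
    rw [Finset.sum_eq_single i] <;> simp +contextual [eq_comm]
  have h2 : ∑ l, (if j = l then (Real.sqrt (θ j))⁻¹ else 0) * Real.sqrt (θ l)
      = (Real.sqrt (θ j))⁻¹ * Real.sqrt (θ j) := by
    rw [Finset.sum_eq_single j] <;> simp +contextual [eq_comm]
  have hne : ∀ l, Real.sqrt (θ l) ≠ 0 := fun l => (Real.sqrt_pos.mpr (hpos l)).ne'
  rw [h1, h2, inv_mul_cancel₀ (hne i), inv_mul_cancel₀ (hne j)]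
  have h3 : ∑ l, (if i = l then (Real.sqrt (θ i))⁻¹ else 0) * (if j = l then (Real.sqrt (θ j))⁻¹ else 0)
      = if i = j then (θ i)⁻¹ else 0 := by
    rw [Finset.sum_eq_single i]
    · by_cases h : i = j
      · subst h
        simp only [if_pos rfl, ite_true, eq_self_iff_true]
        rw [← mul_inv, hsq i]
      · simp [h, Ne.symm h]
    · intro b _ hb
      have : i ≠ b := fun h => hb h.symm
      simp [this]
    · simp
  rw [h3]
  by_cases h : i = j <;> simp [h] <;> linarith [key]
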